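/- arXiv:1105.0964 — 5 statements merged into one kernel-verified Lean document; each statement's English description precedes it below -/
import Mathlib

section
/- Let R₁(x) = ((π² + x²)/x²)·((π² + x²)² + Qπ²) for x > 0 and Q ≥ 0. Then R₁ is strictly convex on (0, ∞) and has a unique global minimizer x_r > 0. -/
/-!
Expanding, `R₁(x) = (a³ + ab)·x⁻² + 3a·x² + x⁴ + (3a² + b)` with `a = π²`, `b = Qπ²`: a sum of
convex terms on `(0, ∞)` one of which, `x⁴`, is strictly convex. The first term blows up at `0⁺`
and the quartic one at `∞`, so the continuous function `R₁` attains its infimum on `(0, ∞)`, and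
strict convexity makes the minimizer unique.
-/

open Real Set Filter Topology

theorem exists_isMinOn_Ioi_zero_of_tendsto_atTop {β : Type*} [LinearOrder β] [TopologicalSpace β]
    [ClosedIicTopology β] {f : ℝ → β} (hf : ContinuousOn f (Ioi 0))
    (h₀ : Tendsto f (𝓝[>] 0) atTop) (h_top : Tendsto f atTop atTop) :
    ∃ x ∈ Ioi (0 : ℝ), IsMinOn f (Ioi 0) x := by
  -- Substituting `x = exp t` turns `(0, ∞)` into `ℝ`, where a coercive function has a minimum.
  have hcont : Continuous (f ∘ exp) :=
    hf.comp_continuous continuous_exp exp_pos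
  have hlim : Tendsto (f ∘ exp) (cocompact ℝ) atTop := by
    rw [cocompact_eq_atBot_atTop]
    exact (h₀.comp tendsto_exp_atBot_nhdsGT).sup (h_top.comp tendsto_exp_atTop)
  obtain ⟨t, ht⟩ := hcont.exists_forall_le hlim
  refine ⟨exp t, exp_pos t, fun y (hy : 0 < y) => ?_⟩
  simpa [exp_log hy] using ht (log y)

noncomputable def marginalRayleigh (a b x : ℝ) : ℝ := ((a + x^2)/x^2) * ((a + x^2)^2 + b)

namespace marginalRayleigh

variable {a b : ℝ}

theorem eq_add_zpow (a b : ℝ) {x : ℝ} (hx : x ≠ 0) :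
    marginalRayleigh a b x = (a^3 + a*b) * x^(-2:ℤ) + 3*a * x^2 + x^4 + (3*a^2 + b) := by
  rw [marginalRayleigh, zpow_neg, zpow_ofNat]
  field_simp
  ring

theorem strictConvexOn (ha : 0 ≤ a) (hb : 0 ≤ b) :
    StrictConvexOn ℝ (Ioi 0) (marginalRayleigh a b) := by
  have hsquare : ConvexOn ℝ (Ioi (0:ℝ)) fun x : ℝ => x^2 :=
    (convexOn_pow 2).subset Ioi_subset_Ici_self (convex_Ioi 0)
  have hquartic : StrictConvexOn ℝ (Ioi (0:ℝ)) fun x : ℝ => x^4 :=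
    (Even.strictConvexOn_pow (by decide) (by decide)).subset (subset_univ _) (convex_Ioi 0)
  have hsum := ((((convexOn_zpow (-2)).smul (by positivity : 0 ≤ a^3 + a*b)).add
    (hsquare.smul (by positivity : 0 ≤ 3*a))).add_strictConvexOn hquartic).add_const (3*a^2 + b)
  refine hsum.congr fun x hx => ?_
  simp [eq_add_zpow a b (ne_of_gt hx), smul_eq_mul]

theorem tendsto_nhdsGT_zero (ha : 0 < a) (hb : 0 ≤ b) :
    Tendsto (marginalRayleigh a b) (𝓝[>] 0) atTop := by
  have hinv : Tendsto (fun x : ℝ => (a^3 + a*b) * (x⁻¹)^2) (𝓝[>] 0) atTop :=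
    ((tendsto_pow_atTop two_ne_zero).comp tendsto_inv_nhdsGT_zero).const_mul_atTop
      (by positivity)
  refine tendsto_atTop_mono' _ ?_ hinv
  filter_upwards [self_mem_nhdsWithin] with x (hx : 0 < x)
  rw [eq_add_zpow a b hx.ne', zpow_neg, zpow_ofNat, inv_pow]
  have : 0 ≤ 3*a * x^2 + x^4 + (3*a^2 + b) := by positivity
  linarith

theorem tendsto_atTop (ha : 0 ≤ a) (hb : 0 ≤ b) :
    Tendsto (marginalRayleigh a b) atTop atTop := by
  refine tendsto_atTop_mono' _ ?_ (tendsto_pow_atTop (n := 4) (by norm_num))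
  filter_upwards [eventually_gt_atTop 0] with x hx
  rw [eq_add_zpow a b hx.ne']
  have : 0 ≤ (a^3 + a*b) * x^(-2:ℤ) + 3*a * x^2 + (3*a^2 + b) := by positivity
  linarith

end marginalRayleigh

theorem stmt_0 (Q : ℝ) (hQ : 0 ≤ Q) :
    StrictConvexOn ℝ (Set.Ioi (0:ℝ))
      (fun x => ((π^2 + x^2)/x^2) * ((π^2 + x^2)^2 + Q*π^2)) ∧
    ∃! xr : ℝ, xr ∈ Set.Ioi (0:ℝ) ∧
      ∀ y ∈ Set.Ioi (0:ℝ),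
        ((π^2 + xr^2)/xr^2) * ((π^2 + xr^2)^2 + Q*π^2)
          ≤ ((π^2 + y^2)/y^2) * ((π^2 + y^2)^2 + Q*π^2) := by
  have ha : 0 < π^2 := by positivity
  have hb : 0 ≤ Q*π^2 := by positivity
  have hconv := marginalRayleigh.strictConvexOn ha.le hb
  obtain ⟨xr, hxr, hmin⟩ := exists_isMinOn_Ioi_zero_of_tendsto_atTop
    (hconv.convexOn.continuousOn isOpen_Ioi) (marginalRayleigh.tendsto_nhdsGT_zero ha hb)
    (marginalRayleigh.tendsto_atTop ha.le hb)
  exact ⟨hconv, xr, ⟨hxr, hmin⟩, fun y ⟨hy, hymin⟩ => hconv.eq_of_isMinOn hymin hmin hy hxr⟩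
end

section
/- Let R₁(x) = (π² + x²)³/x² and L(m) = ((m+1)m)^{1/3}·((m+1)^{2/3}+m^{2/3})^{1/2} for integers m ≥ 0 (with L(0) = 0). For any L > 0 with L(m−1) < L ≤ L(m), the minimizer of R₁ over the set {jπ/L : j ∈ ℤ, j ≥ 1} is attained at j = m; consequently the minimizing wave number α = mπ/L satisfies α ≥ π/(2^{1/3}·(2^{2/3}+1)^{1/2}). -/
open Real

noncomputable def Lcrit (m : ℕ) : ℝ :=
  (((m:ℝ)+1)*(m:ℝ))^((1:ℝ)/3) * (((m:ℝ)+1)^((2:ℝ)/3) + (m:ℝ)^((2:ℝ)/3))^((1:ℝ)/2)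

/-!
Along the admissible wave numbers, `R₁ (jπ/L) = π⁴/L⁴ · (L² + j²)³/j²`, and for `x < y`,
`(c + x)³/x ≤ (c + y)³/y` iff `c³ ≤ xy(3c + x + y)`. For `x = a³`, `y = b³` and `c ≥ 0` the
difference of the two sides factors as `(ab(a + b) - c)` times a positive quadratic, and for
`a = n^{2/3}`, `b = (n+1)^{2/3}` the root `ab(a + b)` is `Lcrit n ^ 2`. So `j ↦ R₁ (jπ/L)`
increases at the step `n → n + 1` iff `L ≤ Lcrit n`; as `Lcrit` is monotone, it decreases up to
`m` and increases from `m` on. The lower bound on `mπ/L` comes from `L ≤ Lcrit m ≤ m · Lcrit 1`.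
-/

noncomputable def R₁ (x : ℝ) : ℝ := (π ^ 2 + x ^ 2) ^ 3 / x ^ 2

theorem Nat.isMinOn_Ici_of_succ_le_of_le_succ {α : Type*} [Preorder α] {f : ℕ → α} {a m : ℕ}
    (hdec : ∀ n, a ≤ n → n < m → f (n + 1) ≤ f n) (hinc : ∀ n, m ≤ n → f n ≤ f (n + 1)) :
    IsMinOn f (Set.Ici a) m := by
  intro j (hj : a ≤ j)
  rcases le_total j m with hjm | hmj
  · suffices ∀ k, j ≤ k → k ≤ m → f k ≤ f j from this m hjm le_rfl
    intro k hjk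
    induction k, hjk using Nat.le_induction with
    | base => exact fun _ => le_rfl
    | succ k hjk ih =>
      exact fun hkm => (hdec k (hj.trans hjk) hkm).trans (ih (k.le_succ.trans hkm))
  · exact monotoneOn_nat_Ici_of_le_succ hinc (le_refl m) hmj hmj

theorem add_cube_div_le_add_cube_div_iff {c x y : ℝ} (hx : 0 < x) (hxy : x < y) :
    (c + x) ^ 3 / x ≤ (c + y) ^ 3 / y ↔ c ^ 3 ≤ x * y * (3 * c + x + y) := by
  have hfactor : (c + y) ^ 3 * x - (c + x) ^ 3 * y
      = (y - x) * (x * y * (3 * c + x + y) - c ^ 3) := by ring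
  rw [div_le_div_iff₀ hx (hx.trans hxy), ← sub_nonneg, hfactor,
    mul_nonneg_iff_of_pos_left (sub_pos.2 hxy), sub_nonneg]

theorem cube_le_iff_le_mul_mul_add {a b c : ℝ} (ha : 0 < a) (hb : 0 < b) (hc : 0 ≤ c) :
    c ^ 3 ≤ a ^ 3 * b ^ 3 * (3 * c + a ^ 3 + b ^ 3) ↔ c ≤ a * b * (a + b) := by
  set s := a * b * (a + b) with hs
  have hs_sq : 4 * (a ^ 3 * b ^ 3) ≤ s ^ 2 := by nlinarith [sq_nonneg (a * b * (a - b))]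
  have hquad : 0 < c ^ 2 + s * c + s ^ 2 - 3 * (a ^ 3 * b ^ 3) := by
    have : 0 ≤ s * c := by positivity
    nlinarith [pow_pos (mul_pos ha hb) 3]
  have hfactor : a ^ 3 * b ^ 3 * (3 * c + a ^ 3 + b ^ 3) - c ^ 3
      = (s - c) * (c ^ 2 + s * c + s ^ 2 - 3 * (a ^ 3 * b ^ 3)) := by rw [hs]; ring
  rw [← sub_nonneg, hfactor, mul_nonneg_iff_of_pos_right hquad, sub_nonneg]

theorem rpow_two_div_three_pow_three {x : ℝ} (hx : 0 ≤ x) : (x ^ ((2:ℝ)/3)) ^ 3 = x ^ 2 := by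
  rw [← Real.rpow_natCast, ← Real.rpow_mul hx, ← Real.rpow_natCast]
  norm_num

theorem Lcrit_nonneg (n : ℕ) : 0 ≤ Lcrit n := by
  unfold Lcrit; positivity

theorem Lcrit_mono : Monotone Lcrit := by
  intro m n hmn
  have hmn' : (m:ℝ) ≤ n := by exact_mod_cast hmn
  unfold Lcrit
  gcongr

theorem Lcrit_sq (n : ℕ) :
    Lcrit n ^ 2 = (n:ℝ) ^ ((2:ℝ)/3) * ((n:ℝ) + 1) ^ ((2:ℝ)/3)
      * ((n:ℝ) ^ ((2:ℝ)/3) + ((n:ℝ) + 1) ^ ((2:ℝ)/3)) := by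
  rw [Lcrit, mul_pow, ← Real.rpow_natCast, ← Real.rpow_mul (by positivity),
    ← Real.rpow_natCast _ 2, ← Real.rpow_mul (by positivity),
    Real.mul_rpow (by positivity) (by positivity)]
  norm_num
  ring

theorem Lcrit_le_mul_Lcrit_one {n : ℕ} (hn : 1 ≤ n) : Lcrit n ≤ n * Lcrit 1 := by
  have hn' : (1:ℝ) ≤ n := by exact_mod_cast hn
  have hba : ((n:ℝ) + 1) ^ ((2:ℝ)/3) ≤ (2:ℝ) ^ ((2:ℝ)/3) * (n:ℝ) ^ ((2:ℝ)/3) := by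
    rw [← Real.mul_rpow (by norm_num) (by positivity)]
    gcongr
    linarith
  have h1 : Lcrit 1 ^ 2 = (2:ℝ) ^ ((2:ℝ)/3) * (1 + (2:ℝ) ^ ((2:ℝ)/3)) := by
    rw [Lcrit_sq]; norm_num
  set a := (n:ℝ) ^ ((2:ℝ)/3)
  set b := ((n:ℝ) + 1) ^ ((2:ℝ)/3)
  set t := (2:ℝ) ^ ((2:ℝ)/3)
  have hsq : Lcrit n ^ 2 ≤ (n * Lcrit 1) ^ 2 := by
    have ha3 : a ^ 3 = (n:ℝ) ^ 2 := rpow_two_div_three_pow_three (by positivity)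
    calc Lcrit n ^ 2 = a * b * (a + b) := Lcrit_sq n
      _ ≤ a * (t * a) * (a + t * a) := by gcongr
      _ = (n * Lcrit 1) ^ 2 := by rw [mul_pow, h1, ← ha3]; ring
  exact (pow_le_pow_iff_left₀ (Lcrit_nonneg n) (mul_nonneg n.cast_nonneg (Lcrit_nonneg 1))
    two_ne_zero).1 hsq

theorem R₁_mul_pi_div (x : ℝ) {L : ℝ} (hL : L ≠ 0) :
    R₁ (x * π / L) = π ^ 4 / L ^ 4 * ((L ^ 2 + x ^ 2) ^ 3 / x ^ 2) := by
  unfold R₁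
  field_simp

theorem R₁_le_R₁_succ_iff {n : ℕ} (hn : 1 ≤ n) {L : ℝ} (hL : 0 < L) :
    R₁ (n * π / L) ≤ R₁ ((n + 1) * π / L) ↔ L ≤ Lcrit n := by
  have hn' : (1:ℝ) ≤ n := by exact_mod_cast hn
  have ha3 := rpow_two_div_three_pow_three (x := (n:ℝ)) (by positivity)
  have hb3 := rpow_two_div_three_pow_three (x := (n:ℝ) + 1) (by positivity)
  rw [R₁_mul_pi_div _ hL.ne', R₁_mul_pi_div _ hL.ne', mul_le_mul_iff_right₀ (by positivity),
    add_cube_div_le_add_cube_div_iff (by positivity) (by gcongr; linarith), ← ha3, ← hb3,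
    cube_le_iff_le_mul_mul_add (by positivity) (by positivity) (by positivity), ← Lcrit_sq,
    pow_le_pow_iff_left₀ hL.le (Lcrit_nonneg n) two_ne_zero]

theorem stmt_3 (m : ℕ) (hm : 1 ≤ m) (L : ℝ) (hL : 0 < L)
    (h1 : Lcrit (m-1) < L) (h2 : L ≤ Lcrit m) :
    (∀ j : ℕ, 1 ≤ j →
      (π^2 + ((m:ℝ)*π/L)^2)^3 / ((m:ℝ)*π/L)^2
        ≤ (π^2 + ((j:ℝ)*π/L)^2)^3 / ((j:ℝ)*π/L)^2) ∧
    (m:ℝ)*π/L ≥ π / ((2:ℝ)^((1:ℝ)/3) * ((2:ℝ)^((2:ℝ)/3) + 1)^((1:ℝ)/2)) := by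
  have hmin : IsMinOn (fun j : ℕ => R₁ (j * π / L)) (Set.Ici 1) m := by
    refine Nat.isMinOn_Ici_of_succ_le_of_le_succ (fun n hn hnm => ?_) (fun n hmn => ?_)
    · have hLn : Lcrit n < L := (Lcrit_mono (Nat.le_sub_one_of_lt hnm)).trans_lt h1
      push_cast
      exact (not_le.1 (mt (R₁_le_R₁_succ_iff hn hL).1 hLn.not_ge)).le
    · push_cast
      exact (R₁_le_R₁_succ_iff (hm.trans hmn) hL).2 (h2.trans (Lcrit_mono hmn))
  refine ⟨fun j hj => hmin hj, ?_⟩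
  have hLcrit_one : Lcrit 1 = (2:ℝ)^((1:ℝ)/3) * ((2:ℝ)^((2:ℝ)/3) + 1)^((1:ℝ)/2) := by
    norm_num [Lcrit]
  rw [ge_iff_le, ← hLcrit_one, div_le_div_iff₀ (by rw [hLcrit_one]; positivity) hL]
  calc π * L ≤ π * (m * Lcrit 1) := by gcongr; exact h2.trans (Lcrit_le_mul_Lcrit_one hm)
    _ = m * π * Lcrit 1 := by ring
end

section
/- For any Q ≥ 0 and any L₁, L₂ > 0, the wave number α minimizing R(α) = ((π² + α²)/α²)·((π² + α²)² + Qπ²) over the set of admissible wave numbers {√(j²π²/L₁² + k²π²/L₂²) : j,k ∈ ℤ≥0, j²+k² ≠ 0} satisfies α ≥ π/(2^{1/3}(2^{2/3}+1)^{1/2}). -/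
open Real

/-! Doubling an admissible wave number gives an admissible one, so minimality of `α` yields
`R(α) ≤ R(2α)`. With `p = π²`, `x = α²` and the `Q`-terms discarded this becomes
`4 (p + x)³ ≤ (p + 4x)³`, i.e. `c (p + x) ≤ p + 4x` for `c = 2^{2/3}`, and since
`4 - c = (c - 1) c (c + 1)` this rearranges to `π² ≤ c (c + 1) α²`. -/

lemma four_mul_cube_le_of_rayleigh_le {p Q x : ℝ} (hp : 0 ≤ p) (hQ : 0 ≤ Q) (hx : 0 < x)
    (h : (p + x) / x * ((p + x) ^ 2 + Q * p)
      ≤ (p + 4 * x) / (4 * x) * ((p + 4 * x) ^ 2 + Q * p)) :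
    4 * (p + x) ^ 3 ≤ (p + 4 * x) ^ 3 := by
  have hcleared :
      4 * (p + x) * ((p + x) ^ 2 + Q * p) ≤ (p + 4 * x) * ((p + 4 * x) ^ 2 + Q * p) := by
    rw [div_mul_eq_mul_div, div_mul_eq_mul_div, div_le_div_iff₀ hx (by positivity)] at h
    nlinarith
  -- the `Q`-terms can be dropped since `p + 4 * x ≤ 4 * (p + x)`
  nlinarith [mul_nonneg hQ hp]

lemma le_mul_of_four_mul_cube_le {c p x : ℝ} (hc : c ^ 3 = 4)
    (h : 4 * (p + x) ^ 3 ≤ (p + 4 * x) ^ 3) : p ≤ c * (c + 1) * x := by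
  have hc1 : 1 < c := by nlinarith [sq_nonneg (c - 1), sq_nonneg (c + 1)]
  have hroot : c * (p + x) ≤ p + 4 * x := by
    rw [← (Nat.odd_iff.mpr rfl : Odd 3).pow_le_pow, mul_pow, hc]
    exact h
  have hfactor : (c - 1) * (c * (c + 1) * x) = (4 - c) * x := by rw [← hc]; ring
  refine le_of_mul_le_mul_left ?_ (sub_pos.mpr hc1)
  linarith

lemma two_rpow_two_div_three_pow_three : ((2 : ℝ) ^ ((2 : ℝ) / 3)) ^ 3 = 4 := by
  rw [← rpow_mul_natCast zero_le_two]
  norm_num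

lemma sq_two_rpow_mul_sqrt :
    ((2 : ℝ) ^ ((1 : ℝ) / 3) * ((2 : ℝ) ^ ((2 : ℝ) / 3) + 1) ^ ((1 : ℝ) / 2)) ^ 2
      = (2 : ℝ) ^ ((2 : ℝ) / 3) * ((2 : ℝ) ^ ((2 : ℝ) / 3) + 1) := by
  rw [mul_pow, ← rpow_mul_natCast zero_le_two, ← rpow_mul_natCast (by positivity)]
  norm_num

def admissibleWaveNumbers (L₁ L₂ : ℝ) : Set ℝ :=
  {a : ℝ | ∃ j k : ℕ, j ^ 2 + k ^ 2 ≠ 0 ∧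
    a = √((j : ℝ) ^ 2 * π ^ 2 / L₁ ^ 2 + (k : ℝ) ^ 2 * π ^ 2 / L₂ ^ 2)}

namespace admissibleWaveNumbers

variable {L₁ L₂ a : ℝ}

lemma pos (hL₁ : L₁ ≠ 0) (hL₂ : L₂ ≠ 0) (ha : a ∈ admissibleWaveNumbers L₁ L₂) :
    0 < a := by
  obtain ⟨j, k, hjk, rfl⟩ := ha
  refine sqrt_pos.mpr ?_
  obtain hj | hk : j ≠ 0 ∨ k ≠ 0 := by contrapose! hjk; simp [hjk]
  · exact add_pos_of_pos_of_nonneg (by positivity) (by positivity)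
  · exact add_pos_of_nonneg_of_pos (by positivity) (by positivity)

lemma natCast_mul_mem {n : ℕ} (hn : n ≠ 0) (ha : a ∈ admissibleWaveNumbers L₁ L₂) :
    (n : ℝ) * a ∈ admissibleWaveNumbers L₁ L₂ := by
  obtain ⟨j, k, hjk, rfl⟩ := ha
  refine ⟨n * j, n * k, ?_, ?_⟩
  · rw [mul_pow, mul_pow, ← mul_add]
    exact mul_ne_zero (pow_ne_zero _ hn) hjk
  · push_cast
    rw [show ((n : ℝ) * j) ^ 2 * π ^ 2 / L₁ ^ 2 + ((n : ℝ) * k) ^ 2 * π ^ 2 / L₂ ^ 2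
          = (n : ℝ) ^ 2 * ((j : ℝ) ^ 2 * π ^ 2 / L₁ ^ 2 + (k : ℝ) ^ 2 * π ^ 2 / L₂ ^ 2)
        by ring,
      sqrt_mul (by positivity), sqrt_sq n.cast_nonneg]

lemma two_mul_mem (ha : a ∈ admissibleWaveNumbers L₁ L₂) :
    2 * a ∈ admissibleWaveNumbers L₁ L₂ := by
  exact_mod_cast natCast_mul_mem two_ne_zero ha

end admissibleWaveNumbers

noncomputable def rayleighNumber (Q a : ℝ) : ℝ :=
  (π ^ 2 + a ^ 2) / a ^ 2 * ((π ^ 2 + a ^ 2) ^ 2 + Q * π ^ 2)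

lemma sq_pi_le_of_rayleighNumber_le_two_mul {Q a : ℝ} (hQ : 0 ≤ Q) (ha : a ≠ 0)
    (h : rayleighNumber Q a ≤ rayleighNumber Q (2 * a)) :
    π ^ 2 ≤ (2 : ℝ) ^ ((2 : ℝ) / 3) * ((2 : ℝ) ^ ((2 : ℝ) / 3) + 1) * a ^ 2 := by
  rw [rayleighNumber, rayleighNumber, mul_pow, show (2 : ℝ) ^ 2 = 4 by norm_num] at h
  exact le_mul_of_four_mul_cube_le two_rpow_two_div_three_pow_three
    (four_mul_cube_le_of_rayleigh_le (sq_nonneg π) hQ (by positivity) h)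

theorem stmt_4 (Q L₁ L₂ : ℝ) (hQ : 0 ≤ Q) (hL₁ : 0 < L₁) (hL₂ : 0 < L₂)
    (A : Set ℝ)
    (hA : A = {a : ℝ | ∃ j k : ℕ, j^2 + k^2 ≠ 0 ∧
      a = Real.sqrt ((j:ℝ)^2*π^2/L₁^2 + (k:ℝ)^2*π^2/L₂^2)})
    (α : ℝ) (hα : α ∈ A)
    (hmin : ∀ a ∈ A,
      ((π^2 + α^2)/α^2) * ((π^2 + α^2)^2 + Q*π^2)
        ≤ ((π^2 + a^2)/a^2) * ((π^2 + a^2)^2 + Q*π^2)) :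
    α ≥ π / ((2:ℝ)^((1:ℝ)/3) * ((2:ℝ)^((2:ℝ)/3) + 1)^((1:ℝ)/2)) := by
  change A = admissibleWaveNumbers L₁ L₂ at hA
  subst hA
  have hα_pos := admissibleWaveNumbers.pos hL₁.ne' hL₂.ne' hα
  have hπ_sq := sq_pi_le_of_rayleighNumber_le_two_mul hQ hα_pos.ne'
    (hmin _ (admissibleWaveNumbers.two_mul_mem hα))
  rw [ge_iff_le, div_le_iff₀ (by positivity),
    ← pow_le_pow_iff_left₀ pi_pos.le (by positivity) two_ne_zero, mul_pow, sq_two_rpow_mul_sqrt]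
  linarith
end

section
/- The unique positive minimizer x_r(Q) of R₁(x,Q) = ((π² + x²)/x²)·((π² + x²)² + Qπ²) is a nondecreasing (in fact increasing) function of Q ≥ 0. -/
open Real

private lemma stmt5_deriv_zero (Q x : ℝ) (hx : 0 < x)
    (hmin : ∀ y : ℝ, 0 < y → y ≠ x →
      ((π^2 + x^2)/x^2) * ((π^2 + x^2)^2 + Q*π^2)
        < ((π^2 + y^2)/y^2) * ((π^2 + y^2)^2 + Q*π^2)) :
    ((2*x * x^2 - (π^2 + x^2) * (2*x)) / (x^2)^2) * ((π^2 + x^2)^2 + Q*π^2)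
      + ((π^2 + x^2)/x^2) * (2 * (π^2 + x^2) * (2*x)) = 0 := by
  have hx2 : x^2 ≠ 0 := pow_ne_zero 2 (ne_of_gt hx)
  have hsq : HasDerivAt (fun y : ℝ => y^2) (2*x) x := by
    simpa using hasDerivAt_pow 2 x
  have hnum : HasDerivAt (fun y : ℝ => π^2 + y^2) (2*x) x := by
    simpa using hsq.const_add (π^2)
  have hu : HasDerivAt (fun y : ℝ => (π^2 + y^2)/y^2)
      ((2*x * x^2 - (π^2 + x^2) * (2*x)) / (x^2)^2) x :=
    hnum.div hsq hx2
  have hv : HasDerivAt (fun y : ℝ => (π^2 + y^2)^2 + Q*π^2)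
      (2 * (π^2 + x^2) * (2*x)) x := by
    simpa using (hnum.pow 2).add_const (Q*π^2)
  have hF : HasDerivAt
      (fun y : ℝ => ((π^2 + y^2)/y^2) * ((π^2 + y^2)^2 + Q*π^2))
      (((2*x * x^2 - (π^2 + x^2) * (2*x)) / (x^2)^2) * ((π^2 + x^2)^2 + Q*π^2)
        + ((π^2 + x^2)/x^2) * (2 * (π^2 + x^2) * (2*x))) x := hu.mul hv
  have hloc : IsLocalMin
      (fun y : ℝ => ((π^2 + y^2)/y^2) * ((π^2 + y^2)^2 + Q*π^2)) x := by
    filter_upwards [Ioi_mem_nhds hx] with y hy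
    rcases eq_or_ne y x with rfl | hne
    · exact le_refl _
    · exact (hmin y hy hne).le
  exact hloc.hasDerivAt_eq_zero hF

theorem stmt_5 (Q₁ Q₂ x₁ x₂ : ℝ) (hQ₁ : 0 ≤ Q₁) (hQ : Q₁ ≤ Q₂)
    (hx₁ : 0 < x₁) (hx₂ : 0 < x₂)
    (hmin₁ : ∀ y : ℝ, 0 < y → y ≠ x₁ →
      ((π^2 + x₁^2)/x₁^2) * ((π^2 + x₁^2)^2 + Q₁*π^2)
        < ((π^2 + y^2)/y^2) * ((π^2 + y^2)^2 + Q₁*π^2))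
    (hmin₂ : ∀ y : ℝ, 0 < y → y ≠ x₂ →
      ((π^2 + x₂^2)/x₂^2) * ((π^2 + x₂^2)^2 + Q₂*π^2)
        < ((π^2 + y^2)/y^2) * ((π^2 + y^2)^2 + Q₂*π^2)) :
    x₁ ≤ x₂ ∧ (Q₁ < Q₂ → x₁ < x₂) := by
  have hπ : (0:ℝ) < π := pi_pos
  have hle : x₁ ≤ x₂ := by
    by_contra hcon
    push_neg at hcon
    have hne : x₂ ≠ x₁ := ne_of_lt hcon
    have h1 := hmin₁ x₂ hx₂ hne
    have h2 := hmin₂ x₁ hx₁ hne.symm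
    have hg : (π^2 + x₁^2)/x₁^2 < (π^2 + x₂^2)/x₂^2 := by
      rw [div_lt_div_iff₀ (by positivity) (by positivity)]
      have hsq : x₂^2 < x₁^2 := by nlinarith
      nlinarith [mul_pos hπ hπ]
    have hsum := add_lt_add h1 h2
    have hmul : 0 ≤ (Q₂ - Q₁) * ((π^2 + x₂^2)/x₂^2 - (π^2 + x₁^2)/x₁^2) :=
      mul_nonneg (by linarith) (by linarith)
    nlinarith [mul_pos hπ hπ, mul_nonneg hmul (mul_pos hπ hπ).le]
  refine ⟨hle, fun hQlt => ?_⟩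
  rcases lt_or_eq_of_le hle with h | h
  · exact h
  · exfalso
    subst h
    have e1 := stmt5_deriv_zero Q₁ x₁ hx₁ hmin₁
    have e2 := stmt5_deriv_zero Q₂ x₁ hx₁ hmin₂
    have hU : (2*x₁ * x₁^2 - (π^2 + x₁^2) * (2*x₁)) / (x₁^2)^2 < 0 := by
      apply div_neg_of_neg_of_pos
      · nlinarith [mul_pos hπ hπ, mul_pos (mul_pos hπ hπ) hx₁]
      · positivity
    have hkey : (2*x₁ * x₁^2 - (π^2 + x₁^2) * (2*x₁)) / (x₁^2)^2
        * ((Q₁ - Q₂) * π^2) = 0 := by linear_combination e1 - e2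
    have hpos : 0 < (2*x₁ * x₁^2 - (π^2 + x₁^2) * (2*x₁)) / (x₁^2)^2
        * ((Q₁ - Q₂) * π^2) := by
      apply mul_pos_of_neg_of_neg hU
      have : Q₁ - Q₂ < 0 := by linarith
      exact mul_neg_of_neg_of_pos this (by positivity)
    linarith
end

section
/- If α ≥ 1.55 and p₂ > 2.24, then for all Q > 0, with γ² = α² + π² and R_r = (γ²/α²)(γ⁴ + Qπ²), one has b = 2π⁴Q(π² − α²) − p₂²α⁴R_r < 0. -/
/-!
Write `a = α²`, `s = π²`, `q = p₂²`. Clearing the denominator of `R_r`,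
`-b = q a (a + s)³ + Q s (q a (a + s) - 2 s (s - a))`, so `b < 0` as soon as
`2 s (s - a) < q a (a + s)`. The left side decreases and the right side increases in `a`, so
this only needs checking at `a = 1.55²`, `q = 2.24²`, where it holds with a margin of about
`0.5` in `147`; hence the need for `π²` to four decimals.
-/

open Real

lemma pi_sq_mem_Ioo : π ^ 2 ∈ Set.Ioo (9.8696 : ℝ) 9.8697 := by
  have hlo := pi_gt_d6
  have hhi := pi_lt_d6
  constructor <;> nlinarith

lemma two_pi_sq_mul_sub_lt {a q : ℝ} (ha : 2.4025 ≤ a) (hq : 5.0176 < q) :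
    2 * π ^ 2 * (π ^ 2 - a) < q * a * (a + π ^ 2) := by
  obtain ⟨hs₀, hs₁⟩ := pi_sq_mem_Ioo
  set s := π ^ 2
  calc 2 * s * (s - a) ≤ 2 * s * (s - 2.4025) := by nlinarith
    _ < 5.0176 * 2.4025 * (2.4025 + s) := by nlinarith
    _ ≤ q * a * (a + s) := by gcongr

lemma two_sq_mul_sub_sub_lt_zero {a s q Q : ℝ} (ha : 0 < a) (hs : 0 < s) (hq : 0 < q)
    (hQ : 0 < Q) (h : 2 * s * (s - a) < q * a * (a + s)) :
    2 * s ^ 2 * Q * (s - a) - q * a * (a + s) * ((a + s) ^ 2 + Q * s) < 0 := by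
  have hcubic : 0 < q * a * (a + s) ^ 3 := by positivity
  have hmargin : 0 < Q * s * (q * a * (a + s) - 2 * s * (s - a)) := by
    have := sub_pos.mpr h
    positivity
  linear_combination hcubic + hmargin

theorem stmt_9 (α p₂ Q : ℝ) (hα : α ≥ 1.55) (hp₂ : p₂ > 2.24) (hQ : 0 < Q)
    (γsq Rr : ℝ)
    (hγ : γsq = α^2 + π^2)
    (hR : Rr = (γsq/α^2) * (γsq^2 + Q*π^2)) :
    2*π^4*Q*(π^2 - α^2) - p₂^2*α^4*Rr < 0 := by
  have hα₀ : 0 < α ^ 2 := by positivity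
  have hRr : p₂ ^ 2 * α ^ 4 * Rr =
      p₂ ^ 2 * α ^ 2 * (α ^ 2 + π ^ 2) * ((α ^ 2 + π ^ 2) ^ 2 + Q * π ^ 2) := by
    rw [hR, hγ]
    field_simp
  have hkey : 2 * π ^ 2 * (π ^ 2 - α ^ 2) < p₂ ^ 2 * α ^ 2 * (α ^ 2 + π ^ 2) :=
    two_pi_sq_mul_sub_lt (by nlinarith) (by nlinarith)
  rw [hRr, show π ^ 4 = (π ^ 2) ^ 2 by ring]
  exact two_sq_mul_sub_sub_lt_zero hα₀ (by positivity) (by positivity) hQ hkey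
end
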